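/- For each 1 ≤ p ≤ ∞, h^p ⊊ h^{HK}: every function u harmonic in the open unit disc D with sup_{0≤r<1} ‖u_r‖_p < ∞ satisfies sup_{0≤r<1} ‖u_r‖ < ∞, and there exists a function u harmonic in D with sup_{0≤r<1} ‖u_r‖ < ∞ but sup_{0≤r<1} ‖u_r‖_1 = ∞ (hence u ∈ h^{HK} but u ∉ h^p for any 1 ≤ p ≤ ∞). -/

import Mathlib

/-!
An `L^p` bound on circles controls the `L¹` norm there, since `|x| ≤ 1 + |x|^p`, and for
continuous periodic functions the Alexiewicz norm is at most the `L¹` norm over a period.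

For strictness take `u = Re ∑ n z^(2^n)`. On the circle of radius `r`,
`u_r = ∑ n r^(2^n) cos (2^n θ)` has the antiderivative `∑ (n / 2^n) r^(2^n) sin (2^n θ)`, which is
bounded by `∑ n / 2^n` uniformly in `r`; so all integrals of `u_r` over intervals are uniformly
bounded. But the `2^N`-th cosine coefficient of `u_r` is `π N r^(2^N)`, which forces
`‖u_r‖₁ ≥ π N / 2` on the circle where `r^(2^N) = 1/2`.

The Henstock–Kurzweil integrals are evaluated by the fundamental theorem of calculus, which holds
for every derivative; the integral is unique by Cousin's lemma.
-/

open Real Filter MeasureTheory Set Topology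

noncomputable section

/-- `f` has Henstock–Kurzweil integral `I` on `[a,b]`: for every `ε > 0` there is a
gauge `δ` such that every `δ`-fine tagged partition of `[a,b]` has Riemann sum
within `ε` of `I`. -/
def HKIntegralEq (f : ℝ → ℝ) (a b I : ℝ) : Prop :=
  ∀ ε > 0, ∃ δ : ℝ → ℝ, (∀ x, 0 < δ x) ∧
    ∀ (n : ℕ) (t ξ : ℕ → ℝ),
      t 0 = a → t n = b →
      (∀ i < n, t i ≤ t (i + 1)) →
      (∀ i < n, t i ≤ ξ i ∧ ξ i ≤ t (i + 1)) →
      (∀ i < n, ξ i - δ (ξ i) < t i ∧ t (i + 1) < ξ i + δ (ξ i)) →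
      |(∑ i ∈ Finset.range n, f (ξ i) * (t (i + 1) - t i)) - I| < ε

/-- `f` is Henstock–Kurzweil integrable on `[a,b]`. -/
def HKIntegrable (f : ℝ → ℝ) (a b : ℝ) : Prop := ∃ I, HKIntegralEq f a b I

open Classical in
/-- The Henstock–Kurzweil integral of `f` on `[a,b]` (junk value `0` if not integrable). -/
def hkIntegral (f : ℝ → ℝ) (a b : ℝ) : ℝ :=
  if h : HKIntegrable f a b then h.choose else 0

/-- The Poisson kernel for the unit disc. -/
def poissonKernelDisc (r θ : ℝ) : ℝ :=
  (1 - r ^ 2) / (2 * π * (1 - 2 * r * Real.cos θ + r ^ 2))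

/-- The Poisson integral of `f`, evaluated at the point `r e^{iθ}` of the unit disc. -/
def poissonIntegral (f : ℝ → ℝ) (r θ : ℝ) : ℝ :=
  hkIntegral (fun φ => f φ * poissonKernelDisc r (φ - θ)) (-π) π

/-- The Alexiewicz norm over the circle: the supremum of `|∫_I g|` over intervals `I`
of length at most `2π`. -/
def alexNorm (g : ℝ → ℝ) : ℝ :=
  sSup {v | ∃ a b : ℝ, a ≤ b ∧ b - a ≤ 2 * π ∧ v = |hkIntegral g a b|}

/-- The `L^p` norm on `[-π,π]`. -/
def lpNorm (p : ℝ) (g : ℝ → ℝ) : ℝ :=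
  (∫ θ in (-π)..π, |g θ| ^ p) ^ (1 / p)

/-- `u` is harmonic on the open unit disc: it is `C²` there and satisfies
Laplace's equation `u_xx + u_yy = 0`. -/
def HarmonicOnDisc (u : ℂ → ℝ) : Prop :=
  ContDiffOn ℝ 2 u (Metric.ball 0 1) ∧
  ∀ z ∈ Metric.ball (0 : ℂ) 1,
    fderiv ℝ (fun w => fderiv ℝ u w 1) z 1
      + fderiv ℝ (fun w => fderiv ℝ u w Complex.I) z Complex.I = 0

/-- The restriction of `u : ℂ → ℝ` to the circle of radius `r`: `θ ↦ u (r e^{iθ})`. -/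
def circleFn (u : ℂ → ℝ) (r θ : ℝ) : ℝ := u ((r : ℂ) * Complex.exp (θ * Complex.I))


def HasFineTaggedPartition (δ : ℝ → ℝ) (a b : ℝ) : Prop :=
  ∃ (n : ℕ) (t ξ : ℕ → ℝ), t 0 = a ∧ t n = b ∧
    (∀ i < n, t i ≤ t (i + 1)) ∧
    (∀ i < n, t i ≤ ξ i ∧ ξ i ≤ t (i + 1)) ∧
    (∀ i < n, ξ i - δ (ξ i) < t i ∧ t (i + 1) < ξ i + δ (ξ i))

namespace HasFineTaggedPartition

variable {δ : ℝ → ℝ} {a x c y : ℝ}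

lemma refl : HasFineTaggedPartition δ a a :=
  ⟨0, fun _ => a, fun _ => a, rfl, rfl, by simp, by simp, by simp⟩

lemma snoc (h : HasFineTaggedPartition δ a x) (hxc : x ≤ c) (hcy : c ≤ y)
    (hx : c - δ c < x) (hy : y < c + δ c) : HasFineTaggedPartition δ a y := by
  obtain ⟨n, t, ξ, h0, hn, hmono, htag, hfine⟩ := h
  refine ⟨n + 1, fun i => if i ≤ n then t i else y, fun i => if i < n then ξ i else c,
    by simpa using h0, by simp, ?_, ?_, ?_⟩ <;>
  · intro i hi
    rcases Nat.lt_succ_iff_lt_or_eq.mp hi with hi | rfl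
    · simp only [hi.le, Nat.succ_le_of_lt hi, hi, if_true]
      first | exact hmono i hi | exact htag i hi | exact hfine i hi
    · simp only [le_refl, if_true, Nat.not_succ_le_self, if_false, lt_irrefl, hn]
      first | linarith | exact ⟨hxc, hcy⟩ | exact ⟨hx, hy⟩

end HasFineTaggedPartition

/-- Cousin's lemma. -/
lemma hasFineTaggedPartition {δ : ℝ → ℝ} (hδ : ∀ x, 0 < δ x) {a b : ℝ} (hab : a ≤ b) :
    HasFineTaggedPartition δ a b := by
  set S : Set ℝ := {x | x ≤ b ∧ HasFineTaggedPartition δ a x}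
  have haS : a ∈ S := ⟨hab, .refl⟩
  have hS : BddAbove S := ⟨b, fun x hx => hx.1⟩
  set c := sSup S
  have hcb : c ≤ b := csSup_le ⟨a, haS⟩ fun x hx => hx.1
  obtain ⟨x, hxS, hcx⟩ : ∃ x ∈ S, c - δ c < x :=
    exists_lt_of_lt_csSup ⟨a, haS⟩ (by linarith [hδ c])
  have hxc : x ≤ c := le_csSup hS hxS
  have hc : HasFineTaggedPartition δ a c := hxS.2.snoc hxc le_rfl hcx (by linarith [hδ c])
  obtain hcb | hcb := hcb.eq_or_lt
  · exact hcb ▸ hc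
  set y := min b (c + δ c / 2)
  have hcy : c < y := lt_min hcb (by linarith [hδ c])
  have hyS : y ∈ S := ⟨min_le_left _ _,
    hxS.2.snoc hxc hcy.le hcx ((min_le_right _ _).trans_lt (by linarith [hδ c]))⟩
  exact absurd (le_csSup hS hyS) (not_le.mpr hcy)

lemma HKIntegralEq.unique {f : ℝ → ℝ} {a b I J : ℝ} (hab : a ≤ b)
    (hI : HKIntegralEq f a b I) (hJ : HKIntegralEq f a b J) : I = J := by
  by_contra hne
  have hε : 0 < |I - J| / 2 := half_pos (abs_pos.mpr (sub_ne_zero.mpr hne))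
  obtain ⟨δ₁, hδ₁, hI⟩ := hI _ hε
  obtain ⟨δ₂, hδ₂, hJ⟩ := hJ _ hε
  obtain ⟨n, t, ξ, h0, hn, hmono, htag, hfine⟩ :=
    hasFineTaggedPartition (fun x => lt_min (hδ₁ x) (hδ₂ x)) hab
  have hI := hI n t ξ h0 hn hmono htag fun i hi => by
    have := hfine i hi; have := min_le_left (δ₁ (ξ i)) (δ₂ (ξ i)); constructor <;> linarith
  have hJ := hJ n t ξ h0 hn hmono htag fun i hi => by
    have := hfine i hi; have := min_le_right (δ₁ (ξ i)) (δ₂ (ξ i)); constructor <;> linarith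
  rw [abs_lt] at hI hJ
  cases abs_cases (I - J) <;> linarith

lemma exists_gauge_of_hasDerivAt {f F : ℝ → ℝ} (hF : ∀ x, HasDerivAt F (f x) x)
    {ε : ℝ} (hε : 0 < ε) : ∃ δ : ℝ → ℝ, (∀ x, 0 < δ x) ∧
      ∀ x y, |y - x| < δ x → |F y - F x - f x * (y - x)| ≤ ε * |y - x| := by
  have h x : ∃ d > 0, ∀ y, |y - x| < d → |F y - F x - f x * (y - x)| ≤ ε * |y - x| := by
    have := (hasDerivAt_iff_isLittleO.mp (hF x)).def hε
    obtain ⟨d, hd, hd'⟩ := Metric.eventually_nhds_iff.mp this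
    refine ⟨d, hd, fun y hy => ?_⟩
    simpa [mul_comm] using hd' (y := y) (by simpa [Real.dist_eq] using hy)
  choose δ hδ hδF using h
  exact ⟨δ, hδ, hδF⟩

lemma abs_sub_sub_mul_le_of_straddle {f F : ℝ → ℝ} {ε : ℝ} {δ : ℝ → ℝ}
    (hδ : ∀ x y, |y - x| < δ x → |F y - F x - f x * (y - x)| ≤ ε * |y - x|)
    {u v ξ : ℝ} (huξ : u ≤ ξ) (hξv : ξ ≤ v) (hu : ξ - δ ξ < u) (hv : v < ξ + δ ξ) :
    |F v - F u - f ξ * (v - u)| ≤ ε * (v - u) := by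
  have h₁ := hδ ξ v (by rw [abs_lt]; constructor <;> linarith)
  have h₂ := hδ ξ u (by rw [abs_lt]; constructor <;> linarith)
  rw [abs_of_nonneg (sub_nonneg.mpr hξv)] at h₁
  rw [abs_of_nonpos (sub_nonpos.mpr huξ)] at h₂
  calc |F v - F u - f ξ * (v - u)|
      = |(F v - F ξ - f ξ * (v - ξ)) - (F u - F ξ - f ξ * (u - ξ))| := by ring_nf
    _ ≤ ε * (v - ξ) + ε * -(u - ξ) := (abs_sub _ _).trans (add_le_add h₁ h₂)
    _ = ε * (v - u) := by ring

lemma hkIntegralEq_sub_of_hasDerivAt {f F : ℝ → ℝ} (hF : ∀ x, HasDerivAt F (f x) x) (a b : ℝ) :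
    HKIntegralEq f a b (F b - F a) := by
  intro ε hε
  set ε' := ε / (|b - a| + 1)
  have hε' : 0 < ε' := by positivity
  obtain ⟨δ, hδ, hδF⟩ := exists_gauge_of_hasDerivAt hF hε'
  refine ⟨δ, hδ, fun n t ξ h0 hn hmono htag hfine => ?_⟩
  calc |∑ i ∈ Finset.range n, f (ξ i) * (t (i + 1) - t i) - (F b - F a)|
      = |∑ i ∈ Finset.range n, -(F (t (i + 1)) - F (t i) - f (ξ i) * (t (i + 1) - t i))| := by
        rw [Finset.sum_neg_distrib, Finset.sum_sub_distrib,
          Finset.sum_range_sub (fun i => F (t i)), h0, hn]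
        ring_nf
    _ ≤ ∑ i ∈ Finset.range n, ε' * (t (i + 1) - t i) := by
        refine (Finset.abs_sum_le_sum_abs _ _).trans (Finset.sum_le_sum fun i hi => ?_)
        rw [Finset.mem_range] at hi
        rw [abs_neg]
        exact abs_sub_sub_mul_le_of_straddle hδF (htag i hi).1 (htag i hi).2 (hfine i hi).1
          (hfine i hi).2
    _ = ε' * (b - a) := by rw [← Finset.mul_sum, Finset.sum_range_sub t, h0, hn]
    _ < ε := by
        rw [div_mul_eq_mul_div, div_lt_iff₀ (by positivity)]
        nlinarith [le_abs_self (b - a)]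

lemma hkIntegral_eq_sub_of_hasDerivAt {f F : ℝ → ℝ} (hF : ∀ x, HasDerivAt F (f x) x) {a b : ℝ}
    (hab : a ≤ b) : hkIntegral f a b = F b - F a := by
  have hI := hkIntegralEq_sub_of_hasDerivAt hF a b
  have hf : HKIntegrable f a b := ⟨_, hI⟩
  rw [hkIntegral, dif_pos hf]
  exact hf.choose_spec.unique hab hI

lemma hkIntegral_eq_intervalIntegral {f : ℝ → ℝ} (hf : Continuous f) {a b : ℝ} (hab : a ≤ b) :
    hkIntegral f a b = ∫ x in a..b, f x := by
  rw [hkIntegral_eq_sub_of_hasDerivAt (fun x => (hf.integral_hasStrictDerivAt a x).hasDerivAt)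
    hab, intervalIntegral.integral_same, sub_zero]

lemma alexNorm_le {g : ℝ → ℝ} {M : ℝ} (hM : 0 ≤ M)
    (h : ∀ a b, a ≤ b → b - a ≤ 2 * π → |hkIntegral g a b| ≤ M) : alexNorm g ≤ M := by
  apply Real.sSup_le _ hM
  rintro v ⟨a, b, hab, hlen, rfl⟩
  exact h a b hab hlen

lemma Function.Periodic.intervalIntegral_le_of_nonneg {h : ℝ → ℝ} {T : ℝ}
    (hper : Function.Periodic h T) (hc : Continuous h) (h0 : 0 ≤ h) {a b : ℝ} (hb : b ≤ a + T)
    (c : ℝ) : ∫ x in a..b, h x ≤ ∫ x in c..c + T, h x := by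
  rw [← hper.intervalIntegral_add_eq a c,
    ← intervalIntegral.integral_add_adjacent_intervals (hc.intervalIntegrable a b)
      (hc.intervalIntegrable b (a + T))]
  have : 0 ≤ ∫ x in b..a + T, h x :=
    intervalIntegral.integral_nonneg (by linarith) fun x _ => h0 x
  linarith

lemma alexNorm_le_integral_abs {g : ℝ → ℝ} (hg : Continuous g)
    (hper : Function.Periodic g (2 * π)) : alexNorm g ≤ ∫ θ in (-π)..π, |g θ| := by
  have hper' : Function.Periodic (fun θ => |g θ|) (2 * π) := fun θ => by simp only [hper θ]
  refine alexNorm_le (intervalIntegral.integral_nonneg (by linarith [pi_pos])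
    fun θ _ => abs_nonneg _) fun a b hab hlen => ?_
  rw [hkIntegral_eq_intervalIntegral hg hab]
  calc |∫ θ in a..b, g θ| ≤ ∫ θ in a..b, |g θ| := intervalIntegral.abs_integral_le_integral_abs hab
    _ ≤ ∫ θ in -π..-π + 2 * π, |g θ| :=
        hper'.intervalIntegral_le_of_nonneg hg.abs (fun θ => abs_nonneg _) (by linarith) (-π)
    _ = ∫ θ in (-π)..π, |g θ| := by ring_nf

lemma lpNorm_nonneg (p : ℝ) (g : ℝ → ℝ) : 0 ≤ lpNorm p g :=
  Real.rpow_nonneg (intervalIntegral.integral_nonneg (by linarith [pi_pos])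
    fun θ _ => Real.rpow_nonneg (abs_nonneg _) p) _

lemma lpNorm_rpow {p : ℝ} (hp : p ≠ 0) (g : ℝ → ℝ) :
    lpNorm p g ^ p = ∫ θ in (-π)..π, |g θ| ^ p := by
  rw [_root_.lpNorm.eq_1, one_div, Real.rpow_inv_rpow _ hp]
  exact intervalIntegral.integral_nonneg (by linarith [pi_pos])
    fun θ _ => Real.rpow_nonneg (abs_nonneg _) p

lemma lpNorm_one (g : ℝ → ℝ) : lpNorm 1 g = ∫ θ in (-π)..π, |g θ| := by
  simp [_root_.lpNorm.eq_1]

lemma le_one_add_rpow {x p : ℝ} (hx : 0 ≤ x) (hp : 1 ≤ p) : x ≤ 1 + x ^ p := by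
  rcases le_or_gt x 1 with h | h
  · linarith [Real.rpow_nonneg hx p]
  · linarith [Real.self_le_rpow_of_one_le h.le hp]

lemma integral_abs_le_two_pi_add_lpNorm_rpow {g : ℝ → ℝ} (hg : Continuous g) {p : ℝ}
    (hp : 1 ≤ p) : ∫ θ in (-π)..π, |g θ| ≤ 2 * π + lpNorm p g ^ p := by
  have hgp : Continuous fun θ => |g θ| ^ p :=
    hg.abs.rpow_const fun _ => Or.inr (by linarith)
  rw [lpNorm_rpow (by linarith) g]
  calc ∫ θ in (-π)..π, |g θ| ≤ ∫ θ in (-π)..π, (1 + |g θ| ^ p) :=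
        intervalIntegral.integral_mono_on (by linarith [pi_pos])
          (hg.abs.intervalIntegrable _ _) ((continuous_const.add hgp).intervalIntegrable _ _)
          fun θ _ => le_one_add_rpow (abs_nonneg _) hp
    _ = 2 * π + ∫ θ in (-π)..π, |g θ| ^ p := by
        rw [intervalIntegral.integral_add intervalIntegrable_const (hgp.intervalIntegrable _ _)]
        simp [two_mul]

lemma ofReal_mul_exp_mem_ball {r : ℝ} (hr : |r| < 1) (θ : ℝ) :
    (r : ℂ) * Complex.exp (θ * Complex.I) ∈ Metric.ball (0 : ℂ) 1 := by
  simpa [Complex.norm_exp_ofReal_mul_I] using hr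

lemma continuous_circleFn {u : ℂ → ℝ} (hu : ContinuousOn u (Metric.ball 0 1)) {r : ℝ}
    (hr : |r| < 1) : Continuous (circleFn u r) :=
  hu.comp_continuous (by fun_prop) (ofReal_mul_exp_mem_ball hr)

lemma circleFn_periodic (u : ℂ → ℝ) (r : ℝ) : Function.Periodic (circleFn u r) (2 * π) := by
  intro θ
  simp only [circleFn, Complex.ofReal_add, add_mul, Complex.exp_add, Complex.ofReal_mul,
    Complex.ofReal_ofNat, Complex.exp_two_pi_mul_I, mul_one]

lemma alexNorm_circleFn_le_of_lpNorm_le {u : ℂ → ℝ} (hu : ContinuousOn u (Metric.ball 0 1))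
    {r : ℝ} (hr : |r| < 1) {p M : ℝ} (hp : 1 ≤ p) (hM : lpNorm p (circleFn u r) ≤ M) :
    alexNorm (circleFn u r) ≤ 2 * π + M ^ p := by
  have hg := continuous_circleFn hu hr
  calc alexNorm (circleFn u r) ≤ ∫ θ in (-π)..π, |circleFn u r θ| :=
        alexNorm_le_integral_abs hg (circleFn_periodic u r)
    _ ≤ 2 * π + lpNorm p (circleFn u r) ^ p := integral_abs_le_two_pi_add_lpNorm_rpow hg hp
    _ ≤ 2 * π + M ^ p := by
        gcongr
        exact lpNorm_nonneg p _

lemma alexNorm_circleFn_le_of_abs_le {u : ℂ → ℝ} (hu : ContinuousOn u (Metric.ball 0 1))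
    {r : ℝ} (hr : |r| < 1) {M : ℝ} (hM : ∀ z ∈ Metric.ball (0 : ℂ) 1, |u z| ≤ M) :
    alexNorm (circleFn u r) ≤ 2 * π * M := by
  have hg := continuous_circleFn hu hr
  calc alexNorm (circleFn u r) ≤ ∫ θ in (-π)..π, |circleFn u r θ| :=
        alexNorm_le_integral_abs hg (circleFn_periodic u r)
    _ ≤ ∫ _ in (-π)..π, M :=
        intervalIntegral.integral_mono_on (by linarith [pi_pos])
          (hg.abs.intervalIntegrable _ _) intervalIntegrable_const
          fun θ _ => hM _ (ofReal_mul_exp_mem_ball hr θ)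
    _ = 2 * π * M := by rw [intervalIntegral.integral_const, smul_eq_mul]; ring

open InnerProductSpace Laplacian in
lemma InnerProductSpace.HarmonicAt.fderiv_fderiv_one_add_fderiv_fderiv_I {F : Type*}
    [NormedAddCommGroup F] [NormedSpace ℝ F] {u : ℂ → F} {z : ℂ} (hu : HarmonicAt u z) :
    fderiv ℝ (fun w => fderiv ℝ u w 1) z 1
      + fderiv ℝ (fun w => fderiv ℝ u w Complex.I) z Complex.I = 0 := by
  have hdiff : DifferentiableAt ℝ (fderiv ℝ u) z :=
    (hu.1.fderiv_right (m := 1) le_rfl).differentiableAt one_ne_zero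
  have happly (v : ℂ) : fderiv ℝ (fun w => fderiv ℝ u w v) z v = fderiv ℝ (fderiv ℝ u) z v v := by
    rw [fderiv_clm_apply hdiff (differentiableAt_const v)]
    simp
  have hΔ : Δ u z = 0 := hu.2.self_of_nhds
  rw [laplacian_eq_iteratedFDeriv_complexPlane] at hΔ
  simpa [iteratedFDeriv_two_apply, happly] using hΔ

lemma harmonicOnDisc_of_harmonicOnNhd {u : ℂ → ℝ}
    (hu : InnerProductSpace.HarmonicOnNhd u (Metric.ball 0 1)) : HarmonicOnDisc u :=
  ⟨hu.contDiffOn, fun z hz => (hu z hz).fderiv_fderiv_one_add_fderiv_fderiv_I⟩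

def lacunary (z : ℂ) : ℂ := ∑' n : ℕ, (n : ℂ) * z ^ 2 ^ n

lemma summable_natCast_mul_pow_two_pow {x : ℝ} (h0 : 0 ≤ x) (h1 : x < 1) :
    Summable fun n : ℕ => (n : ℝ) * x ^ 2 ^ n := by
  have hgeo : Summable fun n : ℕ => (n : ℝ) ^ 1 * x ^ n :=
    summable_pow_mul_geometric_of_norm_lt_one 1 (by rwa [Real.norm_of_nonneg h0])
  refine .of_nonneg_of_le (fun n => by positivity) (fun n => ?_) hgeo
  rw [pow_one]
  exact mul_le_mul_of_nonneg_left (pow_le_pow_of_le_one h0 h1.le Nat.lt_two_pow_self.le)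
    n.cast_nonneg

lemma norm_natCast_mul_pow (n k : ℕ) (z : ℂ) : ‖(n : ℂ) * z ^ k‖ = n * ‖z‖ ^ k := by
  simp

lemma differentiableOn_lacunary : DifferentiableOn ℂ lacunary (Metric.ball 0 1) := by
  intro z hz
  rw [mem_ball_zero_iff] at hz
  obtain ⟨ρ, hzρ, hρ1⟩ := exists_between hz
  have hρ : DifferentiableOn ℂ lacunary (Metric.ball 0 ρ) := by
    refine Complex.differentiableOn_tsum_of_summable_norm
      (summable_natCast_mul_pow_two_pow ((norm_nonneg z).trans hzρ.le) hρ1)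
      (fun n => by fun_prop) Metric.isOpen_ball fun n w hw => ?_
    rw [norm_natCast_mul_pow]
    gcongr
    exact (mem_ball_zero_iff.mp hw).le
  exact (hρ.differentiableAt (Metric.isOpen_ball.mem_nhds
    (mem_ball_zero_iff.mpr hzρ))).differentiableWithinAt

lemma harmonicOnDisc_re_lacunary : HarmonicOnDisc fun z => (lacunary z).re :=
  harmonicOnDisc_of_harmonicOnNhd fun _ hz =>
    (differentiableOn_lacunary.analyticAt (Metric.isOpen_ball.mem_nhds hz)).harmonicAt_re

lemma hasSum_circleFn_re_lacunary {r : ℝ} (hr : |r| < 1) (θ : ℝ) :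
    HasSum (fun n : ℕ => n * r ^ 2 ^ n * Real.cos (2 ^ n * θ))
      (circleFn (fun z => (lacunary z).re) r θ) := by
  set z := (r : ℂ) * Complex.exp (θ * Complex.I)
  have hz : ‖z‖ < 1 := mem_ball_zero_iff.mp (ofReal_mul_exp_mem_ball hr θ)
  have hsum : Summable fun n : ℕ => (n : ℂ) * z ^ 2 ^ n := by
    refine .of_norm ?_
    simp_rw [norm_natCast_mul_pow]
    exact summable_natCast_mul_pow_two_pow (norm_nonneg z) hz
  convert hsum.hasSum.mapL Complex.reCLM using 1
  swap
  · rfl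
  funext n
  have : (n : ℂ) * z ^ 2 ^ n
      = ((n * r ^ 2 ^ n : ℝ) : ℂ) * Complex.exp ((2 ^ n * θ : ℝ) * Complex.I) := by
    simp only [z, mul_pow, ← Complex.exp_nat_mul]
    push_cast
    ring_nf
  rw [Complex.reCLM_apply, this, Complex.re_ofReal_mul, Complex.exp_ofReal_mul_I_re]

def lacunaryPrimitive (r θ : ℝ) : ℝ :=
  ∑' n : ℕ, n / 2 ^ n * r ^ 2 ^ n * Real.sin (2 ^ n * θ)

lemma hasDerivAt_lacunaryPrimitive {r : ℝ} (hr : |r| < 1) (θ : ℝ) :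
    HasDerivAt (lacunaryPrimitive r) (circleFn (fun z => (lacunary z).re) r θ) θ := by
  have hterm (n : ℕ) (y : ℝ) : HasDerivAt (fun y => n / 2 ^ n * r ^ 2 ^ n * Real.sin (2 ^ n * y))
      (n * r ^ 2 ^ n * Real.cos (2 ^ n * y)) y := by
    refine ((((hasDerivAt_id' y).const_mul (2 ^ n : ℝ)).sin).const_mul _).congr_deriv ?_
    field_simp
  have hbound (n : ℕ) (y : ℝ) : ‖(n : ℝ) * r ^ 2 ^ n * Real.cos (2 ^ n * y)‖ ≤ n * |r| ^ 2 ^ n := by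
    rw [Real.norm_eq_abs, abs_mul, abs_mul, abs_pow, Nat.abs_cast]
    exact mul_le_of_le_one_right (by positivity) (Real.abs_cos_le_one _)
  rw [← (hasSum_circleFn_re_lacunary hr θ).tsum_eq]
  exact hasDerivAt_tsum (summable_natCast_mul_pow_two_pow (abs_nonneg r) hr) hterm hbound
    (y₀ := 0) (by simp) θ

lemma summable_natCast_div_two_pow : Summable fun n : ℕ => (n : ℝ) / 2 ^ n := by
  simpa [div_eq_mul_inv] using
    summable_pow_mul_geometric_of_norm_lt_one 1 (r := (2 : ℝ)⁻¹) (by norm_num)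

lemma abs_lacunaryPrimitive_le {r : ℝ} (hr : |r| < 1) (θ : ℝ) :
    |lacunaryPrimitive r θ| ≤ ∑' n : ℕ, (n : ℝ) / 2 ^ n := by
  rw [← Real.norm_eq_abs]
  refine tsum_of_norm_bounded summable_natCast_div_two_pow.hasSum fun n => ?_
  rw [Real.norm_eq_abs, abs_mul, abs_mul, abs_pow,
    abs_of_nonneg (by positivity : (0 : ℝ) ≤ n / 2 ^ n)]
  have hr' : |r| ^ 2 ^ n ≤ 1 := pow_le_one₀ (abs_nonneg r) hr.le
  have := Real.abs_sin_le_one (2 ^ n * θ)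
  calc (n : ℝ) / 2 ^ n * |r| ^ 2 ^ n * |Real.sin (2 ^ n * θ)| ≤ n / 2 ^ n * 1 * 1 := by gcongr
    _ = n / 2 ^ n := by ring

lemma alexNorm_circleFn_re_lacunary_le {r : ℝ} (hr : |r| < 1) :
    alexNorm (circleFn (fun z => (lacunary z).re) r) ≤ 2 * ∑' n : ℕ, (n : ℝ) / 2 ^ n := by
  refine alexNorm_le (by positivity) fun a b hab _ => ?_
  rw [hkIntegral_eq_sub_of_hasDerivAt (hasDerivAt_lacunaryPrimitive hr) hab]
  linarith [abs_sub (lacunaryPrimitive r b) (lacunaryPrimitive r a),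
    abs_lacunaryPrimitive_le hr a, abs_lacunaryPrimitive_le hr b]

lemma integral_cos_int_mul {m : ℤ} (hm : m ≠ 0) : ∫ θ in (-π)..π, Real.cos (m * θ) = 0 := by
  rw [intervalIntegral.integral_comp_mul_left (fun θ => Real.cos θ) (Int.cast_ne_zero.mpr hm),
    integral_cos, mul_neg, Real.sin_neg, Real.sin_int_mul_pi]
  simp

lemma integral_cos_mul_cos {m k : ℕ} (hk : k ≠ 0) :
    ∫ θ in (-π)..π, Real.cos (m * θ) * Real.cos (k * θ) = if m = k then π else 0 := by
  have hsum (θ : ℝ) : Real.cos (m * θ) * Real.cos (k * θ)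
      = Real.cos (((m + k : ℤ) : ℝ) * θ) / 2 + Real.cos (((m - k : ℤ) : ℝ) * θ) / 2 := by
    push_cast
    rw [add_mul, sub_mul, Real.cos_add, Real.cos_sub]
    ring
  simp_rw [hsum]
  rw [intervalIntegral.integral_add (Continuous.intervalIntegrable (by fun_prop) _ _)
    (Continuous.intervalIntegrable (by fun_prop) _ _), intervalIntegral.integral_div,
    intervalIntegral.integral_div, integral_cos_int_mul (by omega)]
  split_ifs with hmk
  · simp [hmk]
  · rw [integral_cos_int_mul (by omega)]
    simp

lemma integral_circleFn_re_lacunary_mul_cos {r : ℝ} (hr : |r| < 1) (N : ℕ) :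
    ∫ θ in (-π)..π, circleFn (fun z => (lacunary z).re) r θ * Real.cos (2 ^ N * θ)
      = π * (N * r ^ 2 ^ N) := by
  have horth (n : ℕ) : ∫ θ in (-π)..π, n * r ^ 2 ^ n * Real.cos (2 ^ n * θ) * Real.cos (2 ^ N * θ)
      = if n = N then π * (N * r ^ 2 ^ N) else 0 := by
    simp_rw [mul_assoc (_ * _ : ℝ)]
    rw [intervalIntegral.integral_const_mul]
    have := integral_cos_mul_cos (m := 2 ^ n) (k := 2 ^ N) (by positivity)
    push_cast at this
    simp only [this, (Nat.pow_right_injective le_rfl).eq_iff]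
    split_ifs with h
    · subst h; ring
    · simp
  have hbound (n : ℕ) (θ : ℝ) :
      ‖n * r ^ 2 ^ n * Real.cos (2 ^ n * θ) * Real.cos (2 ^ N * θ)‖ ≤ n * |r| ^ 2 ^ n := by
    rw [Real.norm_eq_abs, abs_mul, abs_mul, abs_mul, abs_pow, Nat.abs_cast]
    have := Real.abs_cos_le_one (2 ^ n * θ)
    have := Real.abs_cos_le_one (2 ^ N * θ)
    calc (n : ℝ) * |r| ^ 2 ^ n * |Real.cos (2 ^ n * θ)| * |Real.cos (2 ^ N * θ)|
        ≤ n * |r| ^ 2 ^ n * 1 * 1 := by gcongr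
      _ = n * |r| ^ 2 ^ n := by ring
  have hsum := intervalIntegral.hasSum_integral_of_dominated_convergence (a := -π) (b := π)
    (fun (n : ℕ) _ => n * |r| ^ 2 ^ n) (fun n => by fun_prop)
    (fun n => .of_forall fun θ _ => hbound n θ)
    (.of_forall fun _ _ => summable_natCast_mul_pow_two_pow (abs_nonneg r) hr)
    (intervalIntegrable_const (μ := volume))
    (.of_forall fun θ _ => (hasSum_circleFn_re_lacunary hr θ).mul_right (Real.cos (2 ^ N * θ)))
  simp_rw [horth] at hsum
  exact hsum.unique (hasSum_ite_eq N _)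

lemma abs_integral_mul_cos_le_integral_abs {g : ℝ → ℝ} (hg : Continuous g) (k : ℝ) :
    |∫ θ in (-π)..π, g θ * Real.cos (k * θ)| ≤ ∫ θ in (-π)..π, |g θ| := by
  have hπ : -π ≤ π := by linarith [pi_pos]
  refine (intervalIntegral.abs_integral_le_integral_abs hπ).trans
    (intervalIntegral.integral_mono_on hπ (Continuous.intervalIntegrable (by fun_prop) _ _)
      (Continuous.intervalIntegrable (by fun_prop) _ _) fun θ _ => ?_)
  rw [abs_mul]
  exact mul_le_of_le_one_right (abs_nonneg _) (Real.abs_cos_le_one _)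

lemma not_exists_lpNorm_one_circleFn_re_lacunary_le :
    ¬ ∃ M : ℝ, ∀ r ∈ Set.Ico (0 : ℝ) 1, lpNorm 1 (circleFn (fun z => (lacunary z).re) r) ≤ M := by
  rintro ⟨M, hM⟩
  obtain ⟨N, hN⟩ := exists_nat_gt (2 * M / π)
  set r : ℝ := (1 / 2) ^ ((2 ^ N : ℕ) : ℝ)⁻¹
  have hr0 : 0 ≤ r := by positivity
  have hrN : r ^ 2 ^ N = 1 / 2 := Real.rpow_inv_natCast_pow (by norm_num) (by positivity)
  have hr1 : r < 1 := by
    by_contra h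
    have := one_le_pow₀ (n := 2 ^ N) (not_lt.mp h)
    linarith
  have hr : |r| < 1 := by rwa [abs_of_nonneg hr0]
  have hcoeff := abs_integral_mul_cos_le_integral_abs
    (continuous_circleFn harmonicOnDisc_re_lacunary.1.continuousOn hr) (2 ^ N)
  rw [integral_circleFn_re_lacunary_mul_cos hr, hrN, ← lpNorm_one] at hcoeff
  have := (le_abs_self _).trans (hcoeff.trans (hM r ⟨hr0, hr1⟩))
  rw [div_lt_iff₀ pi_pos] at hN
  linarith

/-- for each `1 ≤ p ≤ ∞`, `h^p ⊊ h^{HK}`: a harmonic function on the disc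
with uniformly bounded `L^p` norms on circles (or bounded, for `p = ∞`) has uniformly
bounded Alexiewicz norms on circles; and there is a harmonic function with uniformly
bounded Alexiewicz norms whose `L¹` norms on circles are unbounded. -/
theorem hp_strict_subset_hHK :
    (∀ u : ℂ → ℝ, HarmonicOnDisc u →
      (∀ p : ℝ, 1 ≤ p →
        (∃ M : ℝ, ∀ r ∈ Set.Ico (0 : ℝ) 1, lpNorm p (circleFn u r) ≤ M) →
        ∃ M : ℝ, ∀ r ∈ Set.Ico (0 : ℝ) 1, alexNorm (circleFn u r) ≤ M) ∧
      ((∃ M : ℝ, ∀ z ∈ Metric.ball (0 : ℂ) 1, |u z| ≤ M) →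
        ∃ M : ℝ, ∀ r ∈ Set.Ico (0 : ℝ) 1, alexNorm (circleFn u r) ≤ M)) ∧
    (∃ u : ℂ → ℝ, HarmonicOnDisc u ∧
      (∃ M : ℝ, ∀ r ∈ Set.Ico (0 : ℝ) 1, alexNorm (circleFn u r) ≤ M) ∧
      ¬ ∃ M : ℝ, ∀ r ∈ Set.Ico (0 : ℝ) 1, lpNorm 1 (circleFn u r) ≤ M) := by
  have habs : ∀ r ∈ Set.Ico (0 : ℝ) 1, |r| < 1 := fun r hr => abs_lt.mpr ⟨by linarith [hr.1], hr.2⟩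
  refine ⟨fun u hu => ⟨?_, ?_⟩, ⟨fun z => (lacunary z).re, harmonicOnDisc_re_lacunary,
    ⟨_, fun r hr => alexNorm_circleFn_re_lacunary_le (habs r hr)⟩,
    not_exists_lpNorm_one_circleFn_re_lacunary_le⟩⟩
  · rintro p hp ⟨M, hM⟩
    exact ⟨2 * π + M ^ p, fun r hr =>
      alexNorm_circleFn_le_of_lpNorm_le hu.1.continuousOn (habs r hr) hp (hM r hr)⟩
  · rintro ⟨M, hM⟩
    exact ⟨2 * π * M, fun r hr => alexNorm_circleFn_le_of_abs_le hu.1.continuousOn (habs r hr) hM⟩
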